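/- Open transition composition: let P be a pNet that is not a pLTS with hole j₀ ∈ J, and Q a pNet. Suppose P ⊨ ((β_j)_{j∈J}, Pred, Post ⊢ ⟨s_i^{i∈L}⟩ -α→ ⟨s'_i^{i∈L}⟩) and Q ⊨ ((β_j)_{j∈J_Q}, Pred', Post' ⊢ ⟨s_i^{i∈L_Q}⟩ -α_Q→ ⟨s'_i^{i∈L_Q}⟩). Then P[Q]_{j₀} ⊨ ((β_j)_{j∈(J∖{j₀})⊎J_Q}, Pred ∧ Pred' ∧ (α_Q = β_{j₀}), Post ⊎ Post' ⊢ ⟨s_i^{i∈L⊎L_Q}⟩ -α→ ⟨s'_i^{i∈L⊎L_Q}⟩). -/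
import Mathlib


open Classical

namespace FHPNets

/-! Semantic model of symbolic ingredients: terms are interpreted over valuations. -/

/-- Valuations of variables. -/
abbrev Val (Var D : Type) := Var → D
/-- Action terms (actions with variables), interpreted semantically. -/
abbrev ActT (Var D A : Type) := Val Var D → A
/-- Predicates over variables. -/
abbrev PredT (Var D : Type) := Val Var D → Prop
/-- Substitutions (parallel assignments), interpreted as valuation transformers. -/
abbrev PostT (Var D : Type) := Val Var D → Val Var D

/-- Open transition over holes `N` and states `St`. -/
structure OT (Var D A N St : Type) where
  holes : Set N
  holeAct : N → ActT Var D A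
  pred : PredT Var D
  post : PostT Var D
  src : St
  act : ActT Var D A
  tgt : St

/-- One open transition `ot` (from source `ot.src`) is covered, with respect to the
relation `R`, by a family of open transitions of `T₂` starting at `t`. -/
def Covers {Var D A N St₁ St₂ : Type}
    (T₂ : Set (OT Var D A N St₂))
    (R : St₁ → St₂ → Val Var D → Val Var D → Prop)
    (ot : OT Var D A N St₁) (t : St₂) : Prop :=
  ∃ (X : Type) (fam : X → OT Var D A N St₂),
    (∀ x, fam x ∈ T₂ ∧ (fam x).src = t ∧ (fam x).holes = ot.holes) ∧
    ∀ v₁ v₂, R ot.src t v₁ v₂ → ot.pred v₁ →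
      ∃ x, (∀ j ∈ ot.holes, ot.holeAct j v₁ = (fam x).holeAct j v₂) ∧
        (fam x).pred v₂ ∧ ot.act v₁ = (fam x).act v₂ ∧
        R ot.tgt (fam x).tgt (ot.post v₁) ((fam x).post v₂)

/-- Strong FH-bisimulation between two open automata (given by their transition sets). -/
def IsFHBisim {Var D A N St₁ St₂ : Type}
    (T₁ : Set (OT Var D A N St₁)) (T₂ : Set (OT Var D A N St₂))
    (R : St₁ → St₂ → Val Var D → Val Var D → Prop) : Prop :=
  (∀ ot ∈ T₁, ∀ t : St₂, Covers T₂ R ot t) ∧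
  (∀ ot ∈ T₂, ∀ s : St₁, Covers T₁ (fun t s' v₂ v₁ => R s' t v₁ v₂) ot s)

/-! Weak transitions -/

/-- `vis` : keep only the observable (non-`τ`) hole actions, as one-element sequences. -/
noncomputable def visFam {Var D A N : Type} (τ : A) (J' : Set N) (β : N → ActT Var D A) :
    N → List (ActT Var D A) :=
  fun j => if j ∈ J' ∧ β j ≠ (fun _ => τ) then [β j] else []

/-- Weak open transition: each hole performs a sequence of actions. -/
structure WOT (Var D A N St : Type) where
  γ : N → List (ActT Var D A)
  pred : PredT Var D
  post : PostT Var D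
  src : St
  act : ActT Var D A
  tgt : St

/-- The weak open automaton derived from an open automaton, rules WT1, WT2, WT3. -/
inductive Weak {Var D A N St : Type} (τ : A) (T : Set (OT Var D A N St)) :
    WOT Var D A N St → Prop where
  | wt1 (s : St) : Weak τ T ⟨fun _ => [], fun _ => True, id, s, fun _ => τ, s⟩
  | wt2 {ot : OT Var D A N St} (h : ot ∈ T) :
      Weak τ T ⟨visFam τ ot.holes ot.holeAct, ot.pred, ot.post, ot.src, ot.act, ot.tgt⟩
  | wt3 {w₁ w₂ w₃ : WOT Var D A N St}
      (h₁ : Weak τ T w₁) (h₂ : Weak τ T w₂) (h₃ : Weak τ T w₃)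
      (ha₁ : w₁.act = fun _ => τ) (ha₃ : w₃.act = fun _ => τ)
      (hs₁ : w₁.tgt = w₂.src) (hs₂ : w₂.tgt = w₃.src) :
      Weak τ T ⟨fun j => w₁.γ j ++ (w₂.γ j).map (fun a => a ∘ w₁.post)
                  ++ (w₃.γ j).map (fun a => a ∘ (w₂.post ∘ w₁.post)),
                fun v => w₁.pred v ∧ w₂.pred (w₁.post v) ∧ w₃.pred (w₂.post (w₁.post v)),
                w₃.post ∘ w₂.post ∘ w₁.post, w₁.src, w₂.act ∘ w₁.post, w₃.tgt⟩

/-- Coverage of a (strong) open transition by a family of weak open transitions. -/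
def WCovers {Var D A N St₁ St₂ : Type} (τ : A)
    (T₂ : Set (OT Var D A N St₂))
    (R : St₁ → St₂ → Val Var D → Val Var D → Prop)
    (ot : OT Var D A N St₁) (t : St₂) : Prop :=
  ∃ (X : Type) (fam : X → WOT Var D A N St₂),
    (∀ x, Weak τ T₂ (fam x) ∧ (fam x).src = t ∧
      (∀ j, (fam x).γ j ≠ [] ↔ (j ∈ ot.holes ∧ ot.holeAct j ≠ fun _ => τ))) ∧
    ∀ v₁ v₂, R ot.src t v₁ v₂ → ot.pred v₁ →
      ∃ x, (∀ j ∈ ot.holes, ot.holeAct j ≠ (fun _ => τ) →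
              [ot.holeAct j v₁] = ((fam x).γ j).map (fun a => a v₂)) ∧
        (fam x).pred v₂ ∧ ot.act v₁ = (fam x).act v₂ ∧
        R ot.tgt (fam x).tgt (ot.post v₁) ((fam x).post v₂)

/-- Weak FH-bisimulation between two open automata. -/
def IsWeakFHBisim {Var D A N St₁ St₂ : Type} (τ : A)
    (T₁ : Set (OT Var D A N St₁)) (T₂ : Set (OT Var D A N St₂))
    (R : St₁ → St₂ → Val Var D → Val Var D → Prop) : Prop :=
  (∀ ot ∈ T₁, ∀ t : St₂, WCovers τ T₂ R ot t) ∧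
  (∀ ot ∈ T₂, ∀ s : St₁, WCovers τ T₁ (fun t s' v₂ v₁ => R s' t v₁ v₂) ot s)

/-- `compFrom Θ k` is the composition `Θ (k-1) ⊗ ... ⊗ Θ 0` of substitutions
(the identity when `k = 0`). -/
def compFrom {Var D : Type} (Θ : ℕ → PostT Var D) : ℕ → PostT Var D
  | 0 => id
  | k+1 => Θ k ∘ compFrom Θ k

/-- Index-wise concatenation `⧺` of a finite family of indexed sets of sequences. -/
def concatFam {Var D A N : Type} (n : ℕ) (g : ℕ → N → List (ActT Var D A)) :
    N → List (ActT Var D A) :=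
  fun j => ((List.range n).map fun p => g p j).flatten

/-! pNets -/

/-- Synchronisation vector: (partial) family of action terms of the involved sub-pNets
and holes, resulting global action, and guard. -/
structure SyncVec (Var D A N : Type) where
  acts : N → Option (ActT Var D A)
  res : ActT Var D A
  guard : PredT Var D

/-- Parameterised labelled transition system. -/
structure PLTS (Var D A S : Type) where
  init : S
  vars : Set Var
  trans : S → ActT Var D A → PredT Var D → PostT Var D → S → Prop

/-- pNets: hierarchical structures whose leaves are pLTSs (with global leaf names `ι`)
and holes (with global names `N`); sub-pNets and holes of a node share the index set `N`. -/
inductive PNet (Var D A S N ι : Type) : Type where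
  | plts (i : ι) (p : PLTS Var D A S)
  | node (I : Set N) (subs : N → PNet Var D A S N ι) (J : Set N)
      (sorts : N → Set (ActT Var D A)) (svs : Set (SyncVec Var D A N))

namespace PNet

variable {Var D A S N ι : Type}

/-- Holes of a pNet, at all levels. -/
def pholes : PNet Var D A S N ι → Set N
  | plts _ _ => ∅
  | node I subs J _ _ => J ∪ ⋃ i ∈ I, pholes (subs i)

/-- Leaves of a pNet (names of the pLTSs occurring in it). -/
def pleaves : PNet Var D A S N ι → Set ι
  | plts i _ => {i}
  | node I subs _ _ _ => ⋃ i ∈ I, pleaves (subs i)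

/-- Variables of a pNet. -/
def pvars : PNet Var D A S N ι → Set Var
  | plts _ p => p.vars
  | node I subs _ _ _ => ⋃ i ∈ I, pvars (subs i)

/-- Sort of a pNet. -/
def psort : PNet Var D A S N ι → Set (ActT Var D A)
  | plts _ p => {α | ∃ s g po s', p.trans s α g po s'}
  | node _ _ _ _ svs => (fun sv => sv.res) '' svs

/-- Initial (tuple) states of a pNet. -/
def IsInit : PNet Var D A S N ι → (ι → S) → Prop
  | plts i p, f => f i = p.init
  | node I subs _ _ _, f => ∀ i ∈ I, IsInit (subs i) f

/-- `P` is a pNet node (not a pLTS). -/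
def IsNode : PNet Var D A S N ι → Prop
  | plts _ _ => False
  | node _ _ _ _ _ => True

/-- Fill the (top-level) hole `j₀` of a pNet with the pNet `Q`:
the index `j₀` moves from the holes to the sub-pNets. -/
def fill [DecidableEq N] : PNet Var D A S N ι → N → PNet Var D A S N ι → PNet Var D A S N ι
  | plts i p, _, _ => plts i p
  | node I subs J sorts svs, j₀, Q =>
      node (I ∪ {j₀}) (Function.update subs j₀ Q) (J \ {j₀}) sorts svs

/-- Fill several holes in sequence. -/
def fills [DecidableEq N] (P : PNet Var D A S N ι) :
    List (N × PNet Var D A S N ι) → PNet Var D A S N ι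
  | [] => P
  | (j, Q) :: rest => fills (fill P j Q) rest

/-- Well-formedness of pNets : disjointness conditions of the paper's definition. -/
def WF : PNet Var D A S N ι → Prop
  | plts _ _ => True
  | node I subs J _ _ =>
      (∀ i ∈ I, WF (subs i)) ∧ Disjoint I J ∧
      (∀ i ∈ I, ∀ i' ∈ I, i ≠ i' →
        Disjoint (pvars (subs i)) (pvars (subs i')) ∧
        Disjoint (pleaves (subs i)) (pleaves (subs i')) ∧
        Disjoint (pholes (subs i)) (pholes (subs i'))) ∧
      (∀ i ∈ I, Disjoint (pholes (subs i)) J)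

/-- Open automaton semantics of pNets (rules Tr1 and Tr2). -/
inductive Sem : PNet Var D A S N ι → OT Var D A N (ι → S) → Prop where
  | tr1 {i : ι} {p : PLTS Var D A S} (β : N → ActT Var D A)
      {α : ActT Var D A} {g : PredT Var D} {po : PostT Var D} {src tgt : ι → S}
      (htr : p.trans (src i) α g po (tgt i))
      (hoth : ∀ k, k ≠ i → tgt k = src k)
      (hloc : ∀ v x, x ∉ p.vars → po v x = v x) :
      Sem (plts i p) ⟨∅, β, g, po, src, α, tgt⟩
  | tr2 {I : Set N} {subs : N → PNet Var D A S N ι} {J : Set N}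
      {sorts : N → Set (ActT Var D A)} {svs : Set (SyncVec Var D A N)}
      {sv : SyncVec Var D A N} {f : N → OT Var D A N (ι → S)}
      (β : N → ActT Var D A) (po : PostT Var D) (src tgt : ι → S)
      (hsv : sv ∈ svs)
      (hsub : ∀ m ∈ I, (sv.acts m).isSome → Sem (subs m) (f m))
      (hβdeep : ∀ m ∈ I, (sv.acts m).isSome → ∀ j ∈ (f m).holes, β j = (f m).holeAct j)
      (hβtop : ∀ j ∈ J, ∀ a, sv.acts j = some a → β j = a)
      (hpostIn : ∀ m ∈ I, (sv.acts m).isSome → ∀ v x, x ∈ pvars (subs m) →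
          po v x = (f m).post v x)
      (hpostOut : ∀ v x, (∀ m ∈ I, (sv.acts m).isSome → x ∉ pvars (subs m)) → po v x = v x)
      (hsrc : ∀ m ∈ I, (sv.acts m).isSome → ∀ k ∈ pleaves (subs m),
          src k = (f m).src k ∧ tgt k = (f m).tgt k)
      (hstay : ∀ k, (∀ m ∈ I, (sv.acts m).isSome → k ∉ pleaves (subs m)) → tgt k = src k) :
      Sem (node I subs J sorts svs)
        ⟨{j | j ∈ J ∧ (sv.acts j).isSome} ∪
            ⋃ m ∈ {m | m ∈ I ∧ (sv.acts m).isSome}, (f m).holes,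
         β,
         fun v => (∀ m ∈ I, ∀ a, sv.acts m = some a → (f m).pred v ∧ (f m).act v = a v) ∧
           sv.guard v,
         po, src, sv.res, tgt⟩

/-- The set of open transitions of a pNet: its open automaton semantics. -/
def SemSet (P : PNet Var D A S N ι) : Set (OT Var D A N (ι → S)) := {ot | Sem P ot}

/-- Two pNets are FH-bisimilar. -/
def BisimPNet (P Q : PNet Var D A S N ι) : Prop :=
  pholes P = pholes Q ∧
  ∃ R : (ι → S) → (ι → S) → Val Var D → Val Var D → Prop,
    IsFHBisim (SemSet P) (SemSet Q) R ∧
    ∀ f g, IsInit P f → IsInit Q g → ∃ v₁ v₂, R f g v₁ v₂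

/-- Two pNets are weak FH-bisimilar. -/
def WeakBisimPNet (τ : A) (P Q : PNet Var D A S N ι) : Prop :=
  pholes P = pholes Q ∧
  ∃ R : (ι → S) → (ι → S) → Val Var D → Val Var D → Prop,
    IsWeakFHBisim τ (SemSet P) (SemSet Q) R ∧
    ∀ f g, IsInit P f → IsInit Q g → ∃ v₁ v₂, R f g v₁ v₂

/-- The synchronisation vector `⟨(i ↦ τ)⟩ → τ [True]`. -/
def TauVec [DecidableEq N] (τ : A) (i : N) : SyncVec Var D A N :=
  ⟨fun n => if n = i then some (fun _ => τ) else none, fun _ => τ, fun _ => True⟩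

/-- A pNet cannot observe silent actions (condition on synchronisation vectors,
required at every level of the structure). -/
def CannotObserve [DecidableEq N] (τ : A) : PNet Var D A S N ι → Prop
  | plts _ _ => True
  | node I subs J _ svs =>
      (∀ i ∈ I ∪ J, TauVec τ i ∈ svs) ∧
      (∀ sv ∈ svs, ∀ j ∈ J, ∀ a, sv.acts j = some a → a = (fun _ => τ) →
        (sv.res = fun _ => τ) ∧ ∀ n, n ≠ j → sv.acts n = none) ∧
      (∀ i ∈ I, CannotObserve τ (subs i))

end PNet

/-- An open automaton (with holes `J`) cannot observe `τ` actions. -/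
def OANonObs {Var D A N St : Type} (τ : A) (J : Set N) (T : Set (OT Var D A N St)) : Prop :=
  (∀ j ∈ J, ∀ s : St, ∃ β : N → ActT Var D A,
      β j = (fun _ => τ) ∧
      (⟨{j}, β, fun _ => True, id, s, fun _ => τ, s⟩ : OT Var D A N St) ∈ T) ∧
  (∀ ot ∈ T, ∀ j ∈ ot.holes, ot.holeAct j = (fun _ => τ) →
      ot.act = (fun _ => τ) ∧ ot.src = ot.tgt ∧ ot.pred = (fun _ => True) ∧
        ot.post = id ∧ ot.holes = {j})


open PNet

/-- Auxiliary: the holes of an open transition of `P` are holes of `P`. -/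
theorem sem_holes_subset {Var D A S N ι : Type} {P : PNet Var D A S N ι}
    {ot : OT Var D A N (ι → S)} (h : Sem P ot) : ot.holes ⊆ pholes P := by
  induction h with
  | tr1 => simp [pholes]
  | tr2 β po src tgt hsv hsub hβdeep hβtop hpostIn hpostOut hsrc hstay ih =>
    intro j hj
    simp only [pholes, Set.mem_union, Set.mem_iUnion] at *
    rcases hj with hj | hj
    · exact Or.inl hj.1
    · obtain ⟨m, hm, hjm⟩ := hj
      exact Or.inr ⟨m, hm.1, ih m hm.1 hm.2 hjm⟩

/-- open transition composition. Let `P = node I subs J sorts svs` be a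
pNet (not a pLTS) with hole `j₀ ∈ J`, and `Q` a pNet; suppose `P` has an open transition
whose hole family contains `j₀` and `Q` has an open transition with label `α_Q`. Then the
(well-formed) composition `P[Q]_{j₀}` has an open transition over the holes
`(J' \ {j₀}) ⊎ J_Q`, with predicate `Pred ∧ Pred' ∧ α_Q = β_{j₀}`, post `Post ⊎ Post'`,
the combined states on `L ⊎ L_Q`, and the same resulting label `α`. -/
theorem openTransition_composition {Var D A S N ι : Type} [DecidableEq N]
    (I : Set N) (subs : N → PNet Var D A S N ι) (J : Set N)
    (sorts : N → Set (ActT Var D A)) (svs : Set (SyncVec Var D A N))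
    (Q : PNet Var D A S N ι) (j₀ : N)
    (hj₀ : j₀ ∈ J) (hj₀I : j₀ ∉ I)
    (hWFP : WF (PNet.node I subs J sorts svs))
    (hWFPQ : WF (fill (PNet.node I subs J sorts svs) j₀ Q))
    (hvars : Disjoint (pvars (PNet.node I subs J sorts svs)) (pvars Q))
    (hleaves : Disjoint (pleaves (PNet.node I subs J sorts svs)) (pleaves Q))
    (hholes : Disjoint (pholes (PNet.node I subs J sorts svs)) (pholes Q))
    (otP otQ : OT Var D A N (ι → S))
    (hsemP : Sem (PNet.node I subs J sorts svs) otP)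
    (hsemQ : Sem Q otQ)
    (hj₀holes : j₀ ∈ otP.holes)
    (hQloc : ∀ v x, x ∉ pvars Q → otQ.post v x = v x) :
    ∃ ot : OT Var D A N (ι → S),
      Sem (fill (PNet.node I subs J sorts svs) j₀ Q) ot ∧
      -- holes `(J \ {j₀}) ⊎ J_Q`
      ot.holes = (otP.holes \ {j₀}) ∪ otQ.holes ∧
      (∀ j ∈ otP.holes \ {j₀}, ot.holeAct j = otP.holeAct j) ∧
      (∀ j ∈ otQ.holes, ot.holeAct j = otQ.holeAct j) ∧
      -- same resulting label
      ot.act = otP.act ∧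
      -- `Pred ∧ Pred' ∧ α_Q = β_{j₀}`
      (∀ v, ot.pred v ↔ (otP.pred v ∧ otQ.pred v ∧ otQ.act v = otP.holeAct j₀ v)) ∧
      -- `Post ⊎ Post'`
      (∀ v x, x ∈ pvars Q → ot.post v x = otQ.post v x) ∧
      (∀ v x, x ∉ pvars Q → ot.post v x = otP.post v x) ∧
      -- combined states on `L ⊎ L_Q`
      (∀ i ∈ pleaves Q, ot.src i = otQ.src i ∧ ot.tgt i = otQ.tgt i) ∧
      (∀ i, i ∉ pleaves Q → ot.src i = otP.src i ∧ ot.tgt i = otP.tgt i) := by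
  classical
  have hQholes : otQ.holes ⊆ pholes Q := sem_holes_subset hsemQ
  cases hsemP with
  | tr2 β po src tgt hsv hsub hβdeep hβtop hpostIn hpostOut hsrc hstay =>
    rename_i sv f
    obtain ⟨hWFsubs, hIJ, hpair, hsubJ⟩ := hWFP
    -- subs' holes are disjoint from J, and everything is disjoint from Q's holes
    have hfholes : ∀ m ∈ I, (sv.acts m).isSome → (f m).holes ⊆ pholes (subs m) :=
      fun m hm hs => sem_holes_subset (hsub m hm hs)
    have hnodeholes : ∀ x, x ∈ J ∪ ⋃ i ∈ I, pholes (subs i) → x ∉ pholes Q := by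
      intro x hx
      exact Set.disjoint_left.mp (by simpa [pholes] using hholes) hx
    have hJQ : ∀ x ∈ J, x ∉ pholes Q := fun x hx => hnodeholes x (Or.inl hx)
    have hsubQ : ∀ m ∈ I, ∀ x ∈ pholes (subs m), x ∉ pholes Q := by
      intro m hm x hx
      exact hnodeholes x (Or.inr (Set.mem_biUnion hm hx))
    -- j₀ is a top-level hole involved in sv
    have hj₀some : (sv.acts j₀).isSome := by
      simp only [OT.holes, Set.mem_union, Set.mem_setOf_eq, Set.mem_iUnion] at hj₀holes
      rcases hj₀holes with h | h
      · exact h.2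
      · obtain ⟨m, hm, hjm⟩ := h
        exact absurd hj₀ (Set.disjoint_left.mp (hsubJ m hm.1)
          (hfholes m hm.1 hm.2 hjm))
    obtain ⟨a₀, ha₀⟩ := Option.isSome_iff_exists.mp hj₀some
    have hβj₀ : β j₀ = a₀ := hβtop j₀ hj₀ a₀ ha₀
    -- disjointness of holes used for β'
    have hfQ : ∀ m ∈ I, (sv.acts m).isSome → ∀ j ∈ (f m).holes, j ∉ otQ.holes :=
      fun m hm hs j hj hjQ => hsubQ m hm j (hfholes m hm hs hj) (hQholes hjQ)
    set β' : N → ActT Var D A := fun j => if j ∈ otQ.holes then otQ.holeAct j else β j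
      with hβ'
    set po' : PostT Var D := fun v x => if x ∈ pvars Q then otQ.post v x else po v x
      with hpo'
    set src' : ι → S := fun k => if k ∈ pleaves Q then otQ.src k else src k with hsrc'
    set tgt' : ι → S := fun k => if k ∈ pleaves Q then otQ.tgt k else tgt k with htgt'
    set f' : N → OT Var D A N (ι → S) := Function.update f j₀ otQ with hf'
    have hvars' : ∀ m ∈ I, ∀ x ∈ pvars (subs m), x ∉ pvars Q := by
      intro m hm x hx hxQ
      exact Set.disjoint_left.mp (by simpa [pvars] using hvars)
        (Set.mem_biUnion hm hx) hxQ
    have hleaves' : ∀ m ∈ I, ∀ k ∈ pleaves (subs m), k ∉ pleaves Q := by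
      intro m hm k hk hkQ
      exact Set.disjoint_left.mp (by simpa [pleaves] using hleaves)
        (Set.mem_biUnion hm hk) hkQ
    have hsem' : Sem (fill (PNet.node I subs J sorts svs) j₀ Q)
        ⟨{j | j ∈ J \ {j₀} ∧ (sv.acts j).isSome} ∪
            ⋃ m ∈ {m | m ∈ I ∪ {j₀} ∧ (sv.acts m).isSome}, (f' m).holes,
         β',
         fun v => (∀ m ∈ I ∪ {j₀}, ∀ a, sv.acts m = some a →
             (f' m).pred v ∧ (f' m).act v = a v) ∧ sv.guard v,
         po', src', sv.res, tgt'⟩ := by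
      show Sem (PNet.node (I ∪ {j₀}) (Function.update subs j₀ Q) (J \ {j₀}) sorts svs) _
      refine Sem.tr2 (sv := sv) (f := f') β' po' src' tgt' hsv ?_ ?_ ?_ ?_ ?_ ?_ ?_
      · -- hsub
        rintro m (hm | hm) hs
        · have hne : m ≠ j₀ := fun h => hj₀I (h ▸ hm)
          simpa [hf', Function.update_of_ne hne] using hsub m hm hs
        · rcases hm with rfl
          simpa [hf'] using hsemQ
      · -- hβdeep
        rintro m (hm | hm) hs j hj
        · have hne : m ≠ j₀ := fun h => hj₀I (h ▸ hm)
          rw [hf', Function.update_of_ne hne] at hj ⊢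
          rw [hβ']
          simp only [if_neg (hfQ m hm hs j hj)]
          exact hβdeep m hm hs j hj
        · rcases hm with rfl
          rw [hf', Function.update_self] at hj ⊢
          rw [hβ']
          simp [hj]
      · -- hβtop
        intro j hj a ha
        rw [hβ']
        have : j ∉ otQ.holes := fun h => hJQ j hj.1 (hQholes h)
        simp only [if_neg this]
        exact hβtop j hj.1 a ha
      · -- hpostIn
        rintro m (hm | hm) hs v x hx
        · have hne : m ≠ j₀ := fun h => hj₀I (h ▸ hm)
          rw [Function.update_of_ne hne] at hx
          rw [hf', Function.update_of_ne hne]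
          rw [hpo']
          simp only [if_neg (hvars' m hm x hx)]
          exact hpostIn m hm hs v x hx
        · rcases hm with rfl
          rw [Function.update_self] at hx
          rw [hf', Function.update_self, hpo']
          simp [hx]
      · -- hpostOut
        intro v x hx
        have hxQ : x ∉ pvars Q := by
          have := hx j₀ (Or.inr rfl) hj₀some
          rwa [Function.update_self] at this
        rw [hpo']
        simp only [if_neg hxQ]
        refine hpostOut v x ?_
        intro m hm hs
        have hne : m ≠ j₀ := fun h => hj₀I (h ▸ hm)
        have := hx m (Or.inl hm) hs
        rwa [Function.update_of_ne hne] at this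
      · -- hsrc
        rintro m (hm | hm) hs k hk
        · have hne : m ≠ j₀ := fun h => hj₀I (h ▸ hm)
          rw [Function.update_of_ne hne] at hk
          rw [hf', Function.update_of_ne hne, hsrc', htgt']
          simp only [if_neg (hleaves' m hm k hk)]
          exact hsrc m hm hs k hk
        · rcases hm with rfl
          rw [Function.update_self] at hk
          rw [hf', Function.update_self, hsrc', htgt']
          simp [hk]
      · -- hstay
        intro k hk
        have hkQ : k ∉ pleaves Q := by
          have := hk j₀ (Or.inr rfl) hj₀some
          rwa [Function.update_self] at this
        rw [hsrc', htgt']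
        simp only [if_neg hkQ]
        refine hstay k ?_
        intro m hm hs
        have hne : m ≠ j₀ := fun h => hj₀I (h ▸ hm)
        have := hk m (Or.inl hm) hs
        rwa [Function.update_of_ne hne] at this
    refine ⟨_, hsem', ?_, ?_, ?_, rfl, ?_, ?_, ?_, ?_, ?_⟩
    · -- holes equality
      ext j
      simp only [OT.holes, Set.mem_union, Set.mem_diff, Set.mem_setOf_eq,
        Set.mem_iUnion, Set.mem_singleton_iff]
      constructor
      · rintro (⟨⟨hjJ, hjne⟩, hs⟩ | ⟨m, ⟨hm | hm, hs⟩, hjm⟩)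
        · exact Or.inl ⟨Or.inl ⟨hjJ, hs⟩, hjne⟩
        · have hne : m ≠ j₀ := fun h => hj₀I (h ▸ hm)
          rw [hf', Function.update_of_ne hne] at hjm
          refine Or.inl ⟨Or.inr ⟨m, ⟨hm, hs⟩, hjm⟩, ?_⟩
          intro h
          exact hsubJ m hm |>.le_bot ⟨hfholes m hm hs hjm, h ▸ hj₀⟩ |>.elim
        · rcases hm with rfl
          rw [hf', Function.update_self] at hjm
          exact Or.inr hjm
      · rintro (⟨(⟨hjJ, hs⟩ | ⟨m, ⟨hm, hs⟩, hjm⟩), hjne⟩ | hjQ)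
        · exact Or.inl ⟨⟨hjJ, hjne⟩, hs⟩
        · have hne : m ≠ j₀ := fun h => hj₀I (h ▸ hm)
          refine Or.inr ⟨m, ⟨Or.inl hm, hs⟩, ?_⟩
          rwa [hf', Function.update_of_ne hne]
        · refine Or.inr ⟨j₀, ⟨Or.inr rfl, hj₀some⟩, ?_⟩
          rwa [hf', Function.update_self]
    · -- holeAct on P's holes
      intro j hj
      obtain ⟨hjP, hjne⟩ := hj
      have hjQ : j ∉ otQ.holes := by
        intro hjQ
        simp only [OT.holes, Set.mem_union, Set.mem_setOf_eq, Set.mem_iUnion] at hjP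
        rcases hjP with h | ⟨m, hm, hjm⟩
        · exact hJQ j h.1 (hQholes hjQ)
        · exact hfQ m hm.1 hm.2 j hjm hjQ
      show β' j = β j
      rw [hβ']; simp [hjQ]
    · -- holeAct on Q's holes
      intro j hj
      show β' j = otQ.holeAct j
      rw [hβ']; simp [hj]
    · -- pred
      intro v
      simp only [OT.pred]
      constructor
      · rintro ⟨hall, hg⟩
        have hQ := hall j₀ (Or.inr rfl) a₀ ha₀
        rw [hf', Function.update_self] at hQ
        refine ⟨⟨?_, hg⟩, hQ.1, ?_⟩
        · intro m hm a ha
          have hne : m ≠ j₀ := fun h => hj₀I (h ▸ hm)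
          have := hall m (Or.inl hm) a ha
          rwa [hf', Function.update_of_ne hne] at this
        · show otQ.act v = β j₀ v
          rw [hβj₀]; exact hQ.2
      · rintro ⟨⟨hP, hg⟩, hQp, hQa⟩
        refine ⟨?_, hg⟩
        rintro m (hm | hm) a ha
        · have hne : m ≠ j₀ := fun h => hj₀I (h ▸ hm)
          rw [hf', Function.update_of_ne hne]
          exact hP m hm a ha
        · rcases hm with rfl
          rw [hf', Function.update_self]
          rw [ha₀] at ha
          injection ha with ha
          refine ⟨hQp, ?_⟩
          rw [← ha, ← hβj₀]
          exact hQa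
    · -- post on Q's vars
      intro v x hx
      show po' v x = otQ.post v x
      rw [hpo']; simp [hx]
    · -- post off Q's vars
      intro v x hx
      show po' v x = po v x
      rw [hpo']; simp [hx]
    · -- src/tgt on Q's leaves
      intro i hi
      constructor <;> · show _ = _; simp [hsrc', htgt', hi]
    · -- src/tgt off Q's leaves
      intro i hi
      constructor <;> · show _ = _; simp [hsrc', htgt', hi]

end FHPNets
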